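/- Let π be a unitary representation of a group G on a Hilbert space H with cyclic vector ξ, let N be a normal subgroup, and write ξ = ξ⁰ + ξ^⊥ with ξ⁰ the projection onto the N-fixed vectors. Suppose there is a sequence (h_k) in N such that ⟨π(h_k)ξ^⊥, ξ^⊥⟩ → 0 and ⟨π(h_k)ξ, ξ⟩ → 0. Then ξ⁰ = 0, and hence π has no nonzero N-fixed vector. -/

import Mathlib

open Filter

theorem cyclic_vector_no_fixed_component
    {G H : Type*} [Group G] [NormedAddCommGroup H] [InnerProductSpace ℂ H]
    [CompleteSpace H]
    (π : G →* (H ≃ₗᵢ[ℂ] H)) (N : Subgroup G) (hN : N.Normal)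
    (ξ ξ0 ξp : H) (hsum : ξ = ξ0 + ξp)
    (hξ0fix : ∀ n ∈ N, π n ξ0 = ξ0)
    (hξp : ∀ η : H, (∀ n ∈ N, π n η = η) → (inner ℂ ξp η : ℂ) = 0)
    (hcyc : Dense ((Submodule.span ℂ (Set.range fun g : G => π g ξ) : Submodule ℂ H) : Set H))
    (h : ℕ → G) (hhN : ∀ k, h k ∈ N)
    (hlimp : Tendsto (fun k => (inner ℂ (π (h k) ξp) ξp : ℂ)) atTop (nhds 0))
    (hlim : Tendsto (fun k => (inner ℂ (π (h k) ξ) ξ : ℂ)) atTop (nhds 0)) :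
    ξ0 = 0 ∧ ∀ η : H, (∀ n ∈ N, π n η = η) → η = 0 := by
  have hpξ0 : (inner ℂ ξp ξ0 : ℂ) = 0 := hξp ξ0 hξ0fix
  have hξ0p : (inner ℂ ξ0 ξp : ℂ) = 0 := by
    rw [← inner_conj_symm, hpξ0, map_zero]
  have key : ∀ n ∈ N, (inner ℂ (π n ξp) ξ0 : ℂ) = 0 := by
    intro n hn
    calc (inner ℂ (π n ξp) ξ0 : ℂ) = inner ℂ (π n ξp) (π n ξ0) := by rw [hξ0fix n hn]
    _ = inner ℂ ξp ξ0 := (π n).inner_map_map ξp ξ0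
    _ = 0 := hpξ0
  have expand : ∀ k, (inner ℂ (π (h k) ξ) ξ : ℂ)
      = (‖ξ0‖ ^ 2 : ℂ) + inner ℂ (π (h k) ξp) ξp := by
    intro k
    rw [hsum, map_add, inner_add_left, inner_add_right, inner_add_right,
      hξ0fix (h k) (hhN k), hξ0p, key (h k) (hhN k),
      inner_self_eq_norm_sq_to_K]
    simp
  have hlim2 : Tendsto (fun k => (inner ℂ (π (h k) ξ) ξ : ℂ)) atTop
      (nhds ((‖ξ0‖ ^ 2 : ℂ) + 0)) := by
    simp only [expand]
    exact tendsto_const_nhds.add hlimp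
  have hzero : (‖ξ0‖ ^ 2 : ℂ) = 0 := by
    have := tendsto_nhds_unique hlim hlim2
    simpa using this.symm
  have hξ0 : ξ0 = 0 := by
    have h2 : ‖ξ0‖ ^ 2 = 0 := by exact_mod_cast hzero
    have : ‖ξ0‖ = 0 := by nlinarith [norm_nonneg ξ0]
    simpa using this
  refine ⟨hξ0, fun η hη => ?_⟩
  have hξeq : ξ = ξp := by rw [hsum, hξ0, zero_add]
  have horth : ∀ g : G, (inner ℂ (π g ξ) η : ℂ) = 0 := by
    intro g
    have hfix : ∀ n ∈ N, π n (π g⁻¹ η) = π g⁻¹ η := by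
      intro n hn
      have hconj : g * n * g⁻¹ ∈ N := hN.conj_mem n hn g
      calc π n (π g⁻¹ η) = π (n * g⁻¹) η := by rw [map_mul]; rfl
      _ = π (g⁻¹ * (g * n * g⁻¹)) η := by group
      _ = π g⁻¹ (π (g * n * g⁻¹) η) := by rw [map_mul]; rfl
      _ = π g⁻¹ η := by rw [hη _ hconj]
    have h1 : (inner ℂ ξp (π g⁻¹ η) : ℂ) = 0 := hξp _ hfix
    have hgg : π g (π g⁻¹ η) = η := by
      have : (π g * π g⁻¹) η = η := by rw [← map_mul, mul_inv_cancel, map_one]; rfl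
      rwa [LinearIsometryEquiv.coe_mul, Function.comp_apply] at this
    calc (inner ℂ (π g ξ) η : ℂ) = inner ℂ (π g ξ) (π g (π g⁻¹ η)) := by rw [hgg]
    _ = inner ℂ ξ (π g⁻¹ η) := (π g).inner_map_map _ _
    _ = 0 := by rw [hξeq]; exact h1
  have hmem : η ∈ (Submodule.span ℂ (Set.range fun g : G => π g ξ))ᗮ := by
    rw [Submodule.mem_orthogonal]
    intro u hu
    induction hu using Submodule.span_induction with
    | mem x hx => obtain ⟨g, rfl⟩ := hx; exact horth g
    | zero => simp
    | add x y _ _ hx hy => rw [inner_add_left, hx, hy, add_zero]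
    | smul c x _ hx => rw [inner_smul_left, hx, mul_zero]
  exact hcyc.eq_zero_of_mem_orthogonal hmem
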